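/- arXiv:1907.02754 — 3 statements merged into one kernel-verified Lean document; each statement's English description precedes it below -/
import Mathlib

section
/- Let A be a commutative ring, M a flat A-module, and F a finite free A-module of rank n with an A-linear map φ: F → M. Suppose A is local with maximal ideal m and residue field k, and the induced map F ⊗ k → M ⊗ k is injective. Then for every prime ideal p of A, the induced map F ⊗ k(p) → M ⊗ k(p) is injective, where k(p) is the residue field at p. -/
/-!
Since `M` is flat, the equational criterion lets any element `z` of `Q ⊗ F` killed by `Q ⊗ φ`
be killed already at a finite free stage: `φ` factors as `F →β A^k → M` with `(Q ⊗ β) z = 0`.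
Injectivity of `k ⊗ φ` forces `k ⊗ β` to be injective, so over the local ring `A` the map `β`
between finite free modules is split injective, hence `Q ⊗ β` is injective and `z = 0`.
Thus `φ` stays injective after tensoring with any module, in particular with `k(p)`.
-/

open TensorProduct

namespace Module.Flat

variable {A : Type*} [CommRing A] {M : Type*} [AddCommGroup M] [Module A M]
  {F : Type*} [AddCommGroup F] [Module A F] {Q : Type*} [AddCommGroup Q] [Module A Q]

theorem exists_factorization_of_lTensor_apply_eq_zero [Flat A M] [Free A F] [Module.Finite A F]
    (φ : F →ₗ[A] M) {z : Q ⊗[A] F} (hz : φ.lTensor Q z = 0) :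
    ∃ (k : ℕ) (β : F →ₗ[A] (Fin k → A)) (ψ : (Fin k → A) →ₗ[A] M),
      φ = ψ ∘ₗ β ∧ β.lTensor Q z = 0 := by
  classical
  set b := Free.chooseBasis A F
  set q := equivFinsuppOfBasisRight b z
  have hzq : z = ∑ i, q i ⊗ₜ[A] b i := by
    conv_lhs => rw [← (equivFinsuppOfBasisRight b).symm_apply_apply z]
    rw [equivFinsuppOfBasisRight_symm_apply, Finsupp.sum_fintype _ _ fun _ => zero_tmul Q (b _)]
  have hsum : ∑ i, q i ⊗ₜ[A] φ (b i) = 0 := by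
    simpa [hzq, map_sum] using hz
  obtain ⟨k, c, y, hφy, hcq⟩ := vanishesTrivially_of_sum_tmul_eq_zero_of_rTensor_injective A
    (rTensor_preserves_injective_linearMap _ Subtype.val_injective) hsum
  refine ⟨k, b.constr A c, Fintype.linearCombination A y, b.ext fun i => ?_, ?_⟩
  · simp [hφy, Fintype.linearCombination_apply]
  · rw [hzq, map_sum]
    simp only [LinearMap.lTensor_tmul, Basis.constr_basis]
    -- the same coefficients `c` now witness that `∑ qᵢ ⊗ cᵢ` vanishes trivially in `Q ⊗ A^k`
    exact sum_tmul_eq_zero_of_vanishesTrivially A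
      ⟨k, c, Pi.basisFun A (Fin k), fun i => (Pi.basisFun A (Fin k)).sum_repr (c i) |>.symm, hcq⟩

theorem lTensor_injective_of_lTensor_residueField_injective [IsLocalRing A] [Flat A M]
    [Free A F] [Module.Finite A F] (φ : F →ₗ[A] M)
    (h : Function.Injective (φ.lTensor (IsLocalRing.ResidueField A))) :
    Function.Injective (φ.lTensor Q) := by
  rw [injective_iff_map_eq_zero]
  intro z hz
  obtain ⟨k, β, ψ, rfl, hβz⟩ := exists_factorization_of_lTensor_apply_eq_zero φ hz
  have hβ : Function.Injective (β.lTensor (IsLocalRing.ResidueField A)) := by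
    rw [LinearMap.lTensor_comp, LinearMap.coe_comp] at h
    exact h.of_comp
  obtain ⟨l, hl⟩ := (IsLocalRing.split_injective_iff_lTensor_residueField_injective β).mpr hβ
  calc z = (l ∘ₗ β).lTensor Q z := by rw [hl, LinearMap.lTensor_id, LinearMap.id_apply]
    _ = 0 := by rw [LinearMap.lTensor_comp_apply, hβz, map_zero]

end Module.Flat

/-- Let `A` be a commutative local ring, `M` a flat `A`-module and
`φ : A^n → M` a linear map from a finite free module.  If the induced map
`A^n ⊗ k → M ⊗ k` is injective for the residue field `k` of `A`, then for every
prime `p` of `A` the induced map `A^n ⊗ k(p) → M ⊗ k(p)` is injective, where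
`k(p)` is the residue field at `p`. -/
theorem stmt0 {A : Type} [CommRing A] [IsLocalRing A]
    (M : Type) [AddCommGroup M] [Module A M] [Module.Flat A M]
    (n : ℕ) (φ : (Fin n → A) →ₗ[A] M)
    (h : Function.Injective (LinearMap.baseChange (IsLocalRing.ResidueField A) φ))
    (p : Ideal A) [p.IsPrime] :
    Function.Injective
      (LinearMap.baseChange (IsLocalRing.ResidueField (Localization.AtPrime p)) φ) := by
  rw [LinearMap.baseChange_eq_ltensor] at h ⊢
  exact Module.Flat.lTensor_injective_of_lTensor_residueField_injective φ h
end

section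
/- Let A be a commutative local ring, and let φ: A^n → A^m be an A-linear map such that the induced map k^n → k^m on the residue field k is injective. Then there exists an n×n minor of the matrix of φ which is a unit in A, and consequently for every ring homomorphism A → K to a field, the induced map K^n → K^m is injective. -/
/-!
Over the residue field the rows of the reduced matrix span `kⁿ`, so `n` of them form a basis and
the corresponding `n × n` minor is nonzero in `k`. Since `A` is local, that minor is a unit of `A`;
its image under any `A →+* K` is then a unit, and an invertible `n × n` block of rows forces
injectivity.
-/

namespace Matrix

variable {m n : Type*} [Fintype n]

theorem span_row_eq_top_of_mulVec_injective {K : Type*} [Field K] [Finite m]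
    {M : Matrix m n K} (hM : Function.Injective M.mulVec) :
    Submodule.span K (Set.range M.row) = ⊤ := by
  apply Submodule.eq_top_of_finrank_eq
  rw [← rank_eq_finrank_span_row, rank, LinearMap.finrank_range_of_inj (f := M.mulVecLin) hM]

theorem exists_isUnit_det_submatrix_of_mulVec_injective [DecidableEq n] {K : Type*} [Field K]
    [Finite m] {M : Matrix m n K} (hM : Function.Injective M.mulVec) :
    ∃ g : n → m, Function.Injective g ∧ IsUnit (M.submatrix g id).det := by
  obtain ⟨κ, a, ha, hspan, hli⟩ := exists_linearIndependent' K M.row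
  rw [span_row_eq_top_of_mulVec_injective hM] at hspan
  let e : n ≃ κ := (Pi.basisFun K n).indexEquiv (Module.Basis.mk hli hspan.ge)
  refine ⟨a ∘ e, ha.comp e.injective, ?_⟩
  rw [← isUnit_iff_isUnit_det, ← linearIndependent_rows_iff_isUnit]
  exact hli.comp e e.injective

theorem mulVec_injective_of_isUnit_det_submatrix [DecidableEq n] {R : Type*} [CommRing R]
    {M : Matrix m n R} {g : n → m} (h : IsUnit (M.submatrix g id).det) :
    Function.Injective M.mulVec := fun v w hvw =>
  -- `M.submatrix g id *ᵥ v` is definitionally `(M *ᵥ v) ∘ g`.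
  mulVec_injective_of_isUnit ((isUnit_iff_isUnit_det _).mpr h)
    (congrArg (· ∘ g) hvw : (M *ᵥ v) ∘ g = (M *ᵥ w) ∘ g)

end Matrix

theorem RingHom.map_det_submatrix {l m n R S : Type*} [Fintype l] [DecidableEq l] [CommRing R]
    [CommRing S] (f : R →+* S) (M : Matrix m n R) (e₁ : l → m) (e₂ : l → n) :
    f (M.submatrix e₁ e₂).det = ((M.map f).submatrix e₁ e₂).det := by
  rw [f.map_det, Matrix.submatrix_map]
  rfl

/-- Let `A` be a commutative local ring and `φ : A^n → A^m` a linear map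
whose reduction modulo the maximal ideal `k^n → k^m` is injective.  Then some `n × n`
minor of the matrix of `φ` is a unit in `A`, and consequently for every ring
homomorphism `A → K` into a field, the induced map `K^n → K^m` is injective. -/
theorem stmt1 {A : Type} [CommRing A] [IsLocalRing A] {n m : ℕ}
    (φ : (Fin n → A) →ₗ[A] (Fin m → A))
    (h : Function.Injective
      (((LinearMap.toMatrix' φ).map (IsLocalRing.residue A)).mulVecLin)) :
    (∃ g : Fin n → Fin m, Function.Injective g ∧
        IsUnit (((LinearMap.toMatrix' φ).submatrix g id).det)) ∧
      ∀ (K : Type) [Field K] (f : A →+* K),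
        Function.Injective (((LinearMap.toMatrix' φ).map f).mulVecLin) := by
  obtain ⟨g, hg, hminor⟩ := Matrix.exists_isUnit_det_submatrix_of_mulVec_injective h
  rw [← RingHom.map_det_submatrix, isUnit_map_iff] at hminor
  refine ⟨⟨g, hg, hminor⟩, fun K _ f => ?_⟩
  apply Matrix.mulVec_injective_of_isUnit_det_submatrix (g := g)
  rw [← RingHom.map_det_submatrix]
  exact hminor.map f
end

section
/- Let M be a fine monoid. Then the faces of M (submonoids F such that x + y ∈ F implies x, y ∈ F) are exactly the submonoids of units of the localizations M[-m] for m ∈ M; in particular M has only finitely many faces. -/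
/-
A face `F` is determined by which generators of `M` it contains: if `T` is the finite set of
generators lying in `F` and `m = ∑ T`, then every element of `F` is a sum of elements of `T`,
each of which divides `m`, so `F` is contained in the units of `M[-m]`; conversely `m ∈ F`
forces every divisor of a multiple of `m` into `F`. Since `T` ranges over the subsets of a
finite set, there are finitely many faces.
-/

/-- A face of a commutative monoid: a submonoid `F` such that `x + y ∈ F` implies
`x ∈ F` and `y ∈ F`. -/
def IsFace {M : Type} [AddCommMonoid M] (F : Set M) : Prop :=
  (0 : M) ∈ F ∧ (∀ x y : M, x ∈ F → y ∈ F → x + y ∈ F) ∧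
    ∀ x y : M, x + y ∈ F → x ∈ F ∧ y ∈ F

section

variable {M : Type} [AddCommMonoid M]

/-- The elements of `M` that become units in the localization `M[-m]`. -/
def localizationUnits (m : M) : Set M :=
  {x | ∃ y : M, ∃ k : ℕ, x + y = k • m}

theorem isFace_localizationUnits (m : M) : IsFace (localizationUnits m) := by
  refine ⟨⟨0, 0, by simp⟩, ?_, ?_⟩
  · rintro x x' ⟨y, k, hy⟩ ⟨y', k', hy'⟩
    exact ⟨y + y', k + k', by rw [add_smul, ← hy, ← hy']; abel⟩
  · rintro x x' ⟨y, k, hy⟩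
    exact ⟨⟨x' + y, k, by rw [← hy]; abel⟩, ⟨x + y, k, by rw [← hy]; abel⟩⟩

theorem mem_localizationUnits_sum {T : Finset M} {t : M} (ht : t ∈ T) :
    t ∈ localizationUnits (∑ s ∈ T, s) := by
  classical
  exact ⟨∑ s ∈ T.erase t, s, 1, by rw [one_nsmul, Finset.add_sum_erase T (fun s => s) ht]⟩

namespace IsFace

variable {F F' : Set M}

def toAddSubmonoid (hF : IsFace F) : AddSubmonoid M where
  carrier := F
  add_mem' := hF.2.1 _ _
  zero_mem' := hF.1

theorem localizationUnits_subset (hF : IsFace F) {m : M} (hm : m ∈ F) :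
    localizationUnits m ⊆ F := by
  rintro x ⟨y, k, hxy⟩
  have hkm : k • m ∈ F := hF.toAddSubmonoid.nsmul_mem hm k
  exact (hF.2.2 x y (hxy ▸ hkm)).1

/-- The elements `x` with `x ∈ F → x ∈ F'` form a submonoid, because `F` is a face. -/
theorem subset_of_inter_subset {S : Set M} (hS : AddSubmonoid.closure S = ⊤)
    (hF : IsFace F) (hF' : IsFace F') (h : F ∩ S ⊆ F') : F ⊆ F' := by
  intro x hx
  have hxS : x ∈ AddSubmonoid.closure S := hS ▸ AddSubmonoid.mem_top x
  induction hxS using AddSubmonoid.closure_induction with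
  | mem y hy => exact h ⟨hx, hy⟩
  | zero => exact hF'.1
  | add y z _ _ ihy ihz =>
    obtain ⟨hy, hz⟩ := hF.2.2 y z hx
    exact hF'.2.1 y z (ihy hy) (ihz hz)

theorem eq_localizationUnits_sum [DecidablePred (· ∈ F)] {S : Finset M}
    (hS : AddSubmonoid.closure (S : Set M) = ⊤) (hF : IsFace F) :
    F = localizationUnits (∑ t ∈ S with t ∈ F, t) := by
  have hmF : ∑ t ∈ S with t ∈ F, t ∈ F :=
    hF.toAddSubmonoid.sum_mem fun t ht => (Finset.mem_filter.1 ht).2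
  refine (hF.subset_of_inter_subset hS (isFace_localizationUnits _) ?_).antisymm
    (hF.localizationUnits_subset hmF)
  rintro t ⟨htF, htS⟩
  exact mem_localizationUnits_sum (Finset.mem_filter.2 ⟨htS, htF⟩)

end IsFace

end

/-- Let `M` be a fine monoid.  The faces of `M` are exactly the
submonoids of elements becoming units in the localizations `M[-m]` for `m ∈ M`
(an element `x` is a unit of `M[-m]` iff `x + y = k • m` for some `y ∈ M`, `k ∈ ℕ`);
in particular `M` has only finitely many faces. -/
theorem stmt5 {M : Type} [AddCancelCommMonoid M] [AddMonoid.FG M] :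
    (∀ F : Set M, IsFace F ↔ ∃ m : M, F = {x : M | ∃ y : M, ∃ k : ℕ, x + y = k • m}) ∧
      {F : Set M | IsFace F}.Finite := by
  classical
  obtain ⟨S, hS⟩ := AddMonoid.FG.fg_top (M := M)
  refine ⟨fun F => ⟨fun hF => ⟨_, hF.eq_localizationUnits_sum hS⟩, ?_⟩, ?_⟩
  · rintro ⟨m, rfl⟩
    exact isFace_localizationUnits m
  · refine ((S.powerset : Set (Finset M)).toFinite.image
      fun T => localizationUnits (∑ t ∈ T, t)).subset fun F hF => ?_
    exact ⟨{t ∈ S | t ∈ F}, Finset.mem_powerset.2 (Finset.filter_subset _ _),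
      (IsFace.eq_localizationUnits_sum hS hF).symm⟩
end
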